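/- arXiv:0909.0743 — 2 statements merged into one kernel-verified Lean document; each statement's English description precedes it below -/
import Mathlib

section
/- Let p be a prime and f ∈ KS_{p,2}. Then for all integers h ≥ 1, n ≥ 1 and all s ∈ ℤ_p one has v_p( Δ_h^n f(s) ) ≥ n·(1 + v_p(h)); that is, f also satisfies the Kummer type congruences with arbitrary increment (KS_{p,2} = KSS_{p,2}). -/
/-!
Write `Δ = Δ_1` and `D = Δ_h`, and say that `g` has Kummer level `c` if `p ^ (c + m) ∣ Δ^m g`
for all `m`. Since `Δ` and `D` commute, Newton's formula gives
`Δ^m (D g) = ∑_{k=1}^h C(h, k) Δ^(k+m) g`, and `p ^ (1 + v_p(h)) ∣ C(h, k) p^k` for `k ≥ 1`;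
so `D` raises the level by `1 + v_p(h)`. Starting from level `0` (the hypothesis `f ∈ KS_{p,2}`),
`D^n f` has level `n (1 + v_p(h))`, and the case `m = 0` is the claim.
-/

open Finset

/-- The forward difference operator `Δ_h^n` with increment `h ≥ 1`:
`Δ_h^n f(s) = ∑_{ν=0}^n (n choose ν)·(−1)^(n−ν)·f(s+νh)`. -/
noncomputable def deltaH (p : ℕ) [Fact p.Prime] (h : ℕ) (f : ℤ_[p] → ℤ_[p]) (n : ℕ)
    (s : ℤ_[p]) : ℤ_[p] :=
  ∑ ν ∈ Finset.range (n + 1),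
    (n.choose ν : ℤ_[p]) * (-1) ^ (n - ν) * f (s + (ν : ℤ_[p]) * (h : ℤ_[p]))

/-- `f ∈ KS_{p,2}`: `f` is continuous and satisfies the Kummer type congruences
`Δ^n f(s) ∈ p^n ℤ_p` for all integers `n ≥ 0` and all `s ∈ ℤ_p`. -/
def KS2 (p : ℕ) [Fact p.Prime] (f : ℤ_[p] → ℤ_[p]) : Prop :=
  Continuous f ∧ ∀ (n : ℕ) (s : ℤ_[p]), (p : ℤ_[p]) ^ n ∣ deltaH p 1 f n s

open fwdDiff

theorem Nat.pow_one_add_padicValNat_dvd_choose_mul_pow (p : ℕ) [Fact p.Prime] (h : ℕ) {k : ℕ}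
    (hk : k ≠ 0) : p ^ (1 + padicValNat p h) ∣ h.choose k * p ^ k := by
  rcases lt_or_ge h k with hhk | hkh
  · simp [Nat.choose_eq_zero_of_lt hhk]
  obtain ⟨h, rfl⟩ : ∃ h', h = h' + 1 := ⟨h - 1, by omega⟩
  obtain ⟨k, rfl⟩ : ∃ k', k = k' + 1 := ⟨k - 1, by omega⟩
  have hC : (h + 1).choose (k + 1) ≠ 0 := (Nat.choose_pos hkh).ne'
  have hC' : h.choose k ≠ 0 := (Nat.choose_pos (by omega)).ne'
  -- `(h + 1) * C(h, k) = C(h + 1, k + 1) * (k + 1)` and `v_p(k + 1) ≤ k`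
  have hv := congrArg (padicValNat p) (Nat.add_one_mul_choose_eq h k)
  rw [padicValNat.mul (Nat.add_one_ne_zero _) hC', padicValNat.mul hC (Nat.add_one_ne_zero _)]
    at hv
  have hvk : padicValNat p (k + 1) < k + 1 := padicValNat_lt_self k.add_one_ne_zero
  have hpow : p ^ (k + 1) ≠ 0 := pow_ne_zero _ (Fact.out : p.Prime).ne_zero
  rw [padicValNat_dvd_iff_le (mul_ne_zero hC hpow), padicValNat.mul hC hpow,
    padicValNat.prime_pow]
  omega

theorem fwdDiff_iter_fwdDiff_comm {M G : Type*} [AddCommMonoid M] [AddCommGroup G] (a b : M)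
    (g : M → G) (m : ℕ) :
    (Δ_[a])^[m] (Δ_[b] g) = Δ_[b] ((Δ_[a])^[m] g) := by
  ext y
  simp [fwdDiff_iter_eq_sum_shift, fwdDiff, smul_sub, sum_sub_distrib, add_right_comm]

section KummerLevel

variable {M R : Type*} [AddCommMonoid M] [CommRing R]

def HasKummerLevel (p : ℕ) (a : M) (c : ℕ) (g : M → R) : Prop :=
  ∀ m y, (p : R) ^ (c + m) ∣ ((Δ_[a])^[m] g) y

variable {p : ℕ} {a : M} {c : ℕ} {g : M → R}

theorem HasKummerLevel.dvd (hg : HasKummerLevel p a c g) (y : M) : (p : R) ^ c ∣ g y := by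
  simpa using hg 0 y

theorem HasKummerLevel.fwdDiff_nsmul [Fact p.Prime] (hg : HasKummerLevel p a c g) (h : ℕ) :
    HasKummerLevel p a (c + (1 + padicValNat p h)) (Δ_[h • a] g) := by
  intro m y
  -- Newton's formula, with its `k = 0` term cancelled by the subtraction
  have newton : (Δ_[h • a] ((Δ_[a])^[m] g)) y =
      ∑ k ∈ range h, h.choose (k + 1) • ((Δ_[a])^[k + 1 + m] g) y := by
    rw [fwdDiff, shift_eq_sum_fwdDiff_iter a ((Δ_[a])^[m] g) h y, sum_range_succ']
    simp [← Function.iterate_add_apply]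
  rw [fwdDiff_iter_fwdDiff_comm, newton]
  refine dvd_sum fun k _ => ?_
  obtain ⟨u, hu⟩ := hg (k + 1 + m) y
  have hchoose : (p : R) ^ (1 + padicValNat p h) ∣ h.choose (k + 1) * (p : R) ^ (k + 1) := by
    exact_mod_cast Nat.cast_dvd_cast
      (Nat.pow_one_add_padicValNat_dvd_choose_mul_pow p h k.add_one_ne_zero)
  have hsplit : (h.choose (k + 1) : R) * ((p : R) ^ (c + (k + 1 + m)) * u) =
      (h.choose (k + 1) * (p : R) ^ (k + 1)) * ((p : R) ^ (c + m) * u) := by ring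
  rw [hu, nsmul_eq_mul, hsplit, add_right_comm, add_comm _ (1 + _), pow_add]
  exact mul_dvd_mul hchoose (dvd_mul_right _ _)

theorem HasKummerLevel.fwdDiff_nsmul_iter [Fact p.Prime] (hg : HasKummerLevel p a c g)
    (h n : ℕ) :
    HasKummerLevel p a (c + n * (1 + padicValNat p h)) ((Δ_[h • a])^[n] g) := by
  induction n with
  | zero => simpa using hg
  | succ n ih =>
    rw [Function.iterate_succ_apply', add_mul, one_mul, ← add_assoc]
    exact ih.fwdDiff_nsmul h

end KummerLevel

theorem deltaH_eq_fwdDiff_iter (p : ℕ) [Fact p.Prime] (h : ℕ) (f : ℤ_[p] → ℤ_[p]) (n : ℕ)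
    (s : ℤ_[p]) : deltaH p h f n s = ((Δ_[h • 1])^[n] f) s := by
  simp [deltaH, fwdDiff_iter_eq_sum_shift, mul_comm]

theorem stmt3 (p : ℕ) [Fact p.Prime] (f : ℤ_[p] → ℤ_[p]) (hf : KS2 p f) :
    ∀ (h n : ℕ), 1 ≤ h → 1 ≤ n → ∀ s : ℤ_[p],
      (p : ℤ_[p]) ^ (n * (1 + padicValNat p h)) ∣ deltaH p h f n s := by
  intro h n _ _ s
  have hlevel : HasKummerLevel p (1 : ℤ_[p]) 0 f := fun m y => by
    simpa [deltaH_eq_fwdDiff_iter] using hf.2 m y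
  simpa [deltaH_eq_fwdDiff_iter] using (hlevel.fwdDiff_nsmul_iter h n).dvd s
end

section
/- Let p be a prime and f ∈ KS_{p,2} such that Δ¹f(0)/p is a unit of ℤ_p, and assume additionally, in case p = 2, that Δ²f(0)/4 ∈ 2ℤ_2. Then f satisfies the strong Kummer congruences: ‖f(s) − f(t)‖_p = p^{−1}·‖s − t‖_p for all s, t ∈ ℤ_p. -/
open Finset

/-!
For natural `c`, Newton's expansion `f (t + c) = ∑ₖ (c choose k) Δᵏf(t)` together with the Kummer
congruences `pᵏ ∣ Δᵏf` and `v_p (c choose k) ≥ v_p c - v_p k` shows that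
`f (t + pᵐ x) ≡ f t + pᵐ x Δf(t) mod pᵐ⁺²`: for `k ≥ 2` one has `v_p k ≤ k - 2`, except for
`p = k = 2`, where the hypothesis on `Δ²f` supplies the missing factor. The difference of the two
sides is continuous in `x` and `ℕ` is dense in `ℤ_p`, so the congruence holds for all `x ∈ ℤ_p`;
in the same way `Δf(t) ≡ Δf(0) mod p²` is `p` times a unit. Writing `s - t = pᵐ u` with `u` a
unit, `f s - f t` is `pᵐ⁺¹` times a unit.
-/

open fwdDiff

theorem Continuous.fwdDiff_iter {M G : Type*} [AddCommMonoid M] [TopologicalSpace M]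
    [ContinuousAdd M] [AddCommGroup G] [TopologicalSpace G] [ContinuousSub G]
    {f : M → G} (hf : Continuous f) (h : M) (n : ℕ) : Continuous (Δ_[h] ^[n] f) := by
  induction n with
  | zero => exact hf
  | succ n ih =>
    rw [Function.iterate_succ_apply']
    exact (ih.comp (continuous_add_const h)).sub ih

theorem dvd_shift_sub_sum_fwdDiff_iter {M R : Type*} [AddCommMonoid M] [CommRing R] (h : M)
    (g : M → R) (y : M) (c j : ℕ) {d : R} (hd : ∀ k, j ≤ k → d ∣ c.choose k • Δ_[h] ^[k] g y) :
    d ∣ g (y + c • h) - ∑ k ∈ range j, c.choose k • Δ_[h] ^[k] g y := by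
  have hsum : g (y + c • h) = ∑ k ∈ range (j + (c + 1)), c.choose k • Δ_[h] ^[k] g y := by
    rw [shift_eq_sum_fwdDiff_iter h g c y]
    refine sum_subset (range_subset_range.2 (by omega)) fun k _ hk => ?_
    rw [Nat.choose_eq_zero_of_lt (by simpa using hk), zero_smul]
  rw [hsum, sum_range_add, add_sub_cancel_left]
  exact dvd_sum fun k _ => hd _ (by omega)

theorem Nat.pow_sub_factorization_dvd_choose {p m c k : ℕ} (hp : p.Prime) (hk : k ≠ 0)
    (hmc : p ^ m ∣ c) : p ^ (m - k.factorization p) ∣ c.choose k := by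
  rcases eq_or_ne (c.choose k) 0 with h0 | h0
  · simp [h0]
  obtain ⟨c, rfl⟩ : ∃ c', c = c' + 1 :=
    ⟨c - 1, by have := mt (Nat.choose_eq_zero_of_lt (n := c) (k := k)) h0; omega⟩
  obtain ⟨k, rfl⟩ : ∃ k', k = k' + 1 := ⟨k - 1, by omega⟩
  have hmul : p ^ m ∣ (c + 1).choose (k + 1) * (k + 1) :=
    Nat.add_one_mul_choose_eq c k ▸ hmc.mul_right _
  rw [hp.pow_dvd_iff_le_factorization (by positivity), Nat.factorization_mul h0 (by omega),
    Finsupp.add_apply] at hmul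
  rw [hp.pow_dvd_iff_le_factorization h0]
  omega

theorem Nat.factorization_add_two_le {p k : ℕ} (hp : p.Prime) (hk : 2 ≤ k) (h2 : p = 2 → k ≠ 2) :
    k.factorization p + 2 ≤ k := by
  have hpow : p ^ k.factorization p ≤ k := Nat.ordProj_le p (by omega)
  have h2pow : 2 ^ k.factorization p ≤ p ^ k.factorization p := Nat.pow_le_pow_left hp.two_le _
  generalize k.factorization p = v at hpow h2pow
  by_contra! hlt
  match v with
  | 0 => omega
  | 1 =>
    rw [pow_one] at hpow
    exact h2 (by have := hp.two_le; omega) (by omega)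
  | w + 2 =>
    have := Nat.lt_two_pow_self (n := w)
    rw [pow_add] at h2pow
    omega

section

variable {p : ℕ} [Fact p.Prime]

theorem PadicInt.isClosed_setOf_pow_dvd (n : ℕ) :
    IsClosed {x : ℤ_[p] | (p : ℤ_[p]) ^ n ∣ x} := by
  simp_rw [← Ideal.mem_span_singleton, ← PadicInt.norm_le_pow_iff_mem_span_pow]
  exact isClosed_le continuous_norm continuous_const

theorem PadicInt.pow_dvd_of_forall_natCast {g : ℤ_[p] → ℤ_[p]} (hg : Continuous g) {n : ℕ}
    (h : ∀ c : ℕ, (p : ℤ_[p]) ^ n ∣ g c) (x : ℤ_[p]) : (p : ℤ_[p]) ^ n ∣ g x :=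
  PadicInt.denseRange_natCast.induction_on (p := fun x => (p : ℤ_[p]) ^ n ∣ g x) x
    ((isClosed_setOf_pow_dvd n).preimage hg) h

theorem PadicInt.isUnit_add_p_mul {u : ℤ_[p]} (hu : IsUnit u) (r : ℤ_[p]) :
    IsUnit (u + p * r) := by
  rw [PadicInt.isUnit_iff] at hu ⊢
  have : ‖(p : ℤ_[p]) * r‖ < 1 := PadicInt.norm_lt_one_iff_dvd _ |>.2 (dvd_mul_right _ _)
  rw [IsUltrametricDist.norm_add_eq_max_of_norm_ne_norm (by rw [hu]; exact this.ne'), hu]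
  exact max_eq_left this.le

theorem deltaH_one_eq_fwdDiff_iter (f : ℤ_[p] → ℤ_[p]) (n : ℕ) (s : ℤ_[p]) :
    deltaH p 1 f n s = Δ_[1] ^[n] f s := by
  rw [fwdDiff_iter_eq_sum_shift, deltaH]
  refine sum_congr rfl fun k _ => ?_
  simp only [Nat.cast_one, mul_one, nsmul_one, zsmul_eq_mul]
  push_cast
  ring

theorem pow_dvd_fwdDiff_iter_sub_fwdDiff_iter_zero {f : ℤ_[p] → ℤ_[p]} (hf : Continuous f)
    {j N : ℕ} (hdvd : ∀ k s, j < k → (p : ℤ_[p]) ^ N ∣ Δ_[1] ^[k] f s) (s : ℤ_[p]) :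
    (p : ℤ_[p]) ^ N ∣ Δ_[1] ^[j] f s - Δ_[1] ^[j] f 0 := by
  refine PadicInt.pow_dvd_of_forall_natCast
    ((hf.fwdDiff_iter 1 j).sub continuous_const) (fun c => ?_) s
  have := dvd_shift_sub_sum_fwdDiff_iter 1 (Δ_[1] ^[j] f) 0 c 1 fun k hk => by
    rw [← Function.iterate_add_apply, nsmul_eq_mul]
    exact (hdvd _ 0 (by omega)).mul_left _
  simpa using this

theorem exists_isUnit_fwdDiff_eq_p_mul {f : ℤ_[p] → ℤ_[p]} (hf : Continuous f)
    (hdvd : ∀ n s, (p : ℤ_[p]) ^ n ∣ Δ_[1] ^[n] f s)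
    (h1 : ∃ u : ℤ_[p], IsUnit u ∧ Δ_[1] f 0 = p * u) (t : ℤ_[p]) :
    ∃ w : ℤ_[p], IsUnit w ∧ Δ_[1] f t = p * w := by
  obtain ⟨u, hu, hu0⟩ := h1
  obtain ⟨r, hr⟩ := pow_dvd_fwdDiff_iter_sub_fwdDiff_iter_zero (j := 1) (N := 2) hf
    (fun k s hk => (pow_dvd_pow _ hk).trans (hdvd k s)) t
  refine ⟨u + p * r, PadicInt.isUnit_add_p_mul hu r, ?_⟩
  simp only [Function.iterate_one] at hr
  linear_combination hr + hu0

theorem pow_dvd_choose_smul_fwdDiff_iter {f : ℤ_[p] → ℤ_[p]}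
    (hdvd : ∀ n s, (p : ℤ_[p]) ^ n ∣ Δ_[1] ^[n] f s)
    (hD2 : p = 2 → ∀ s, (p : ℤ_[p]) ^ 3 ∣ Δ_[1] ^[2] f s)
    {m c k : ℕ} (hmc : p ^ m ∣ c) (hk : 2 ≤ k) (s : ℤ_[p]) :
    (p : ℤ_[p]) ^ (m + 2) ∣ c.choose k • Δ_[1] ^[k] f s := by
  have hp : p.Prime := Fact.out
  have hchoose : (p : ℤ_[p]) ^ (m - k.factorization p) ∣ (c.choose k : ℤ_[p]) := by
    exact_mod_cast Nat.cast_dvd_cast (Nat.pow_sub_factorization_dvd_choose hp (by omega) hmc)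
  suffices ∃ b, m + 2 ≤ m - k.factorization p + b ∧ (p : ℤ_[p]) ^ b ∣ Δ_[1] ^[k] f s by
    obtain ⟨b, hb, hdiff⟩ := this
    rw [nsmul_eq_mul]
    refine (pow_dvd_pow _ hb).trans ?_
    rw [pow_add]
    exact mul_dvd_mul hchoose hdiff
  by_cases h22 : p = 2 ∧ k = 2
  · obtain ⟨rfl, rfl⟩ := h22
    refine ⟨3, ?_, hD2 rfl s⟩
    rw [Nat.Prime.factorization_self Nat.prime_two]
    omega
  · have := Nat.factorization_add_two_le hp hk fun hp2 hk2 => h22 ⟨hp2, hk2⟩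
    exact ⟨k, by omega, hdvd k s⟩

theorem pow_dvd_sub_sub_mul_fwdDiff {f : ℤ_[p] → ℤ_[p]} (hf : Continuous f)
    (hdvd : ∀ n s, (p : ℤ_[p]) ^ n ∣ Δ_[1] ^[n] f s)
    (hD2 : p = 2 → ∀ s, (p : ℤ_[p]) ^ 3 ∣ Δ_[1] ^[2] f s) (t : ℤ_[p]) (m : ℕ) (x : ℤ_[p]) :
    (p : ℤ_[p]) ^ (m + 2) ∣ f (t + p ^ m * x) - f t - p ^ m * x * Δ_[1] f t := by
  refine PadicInt.pow_dvd_of_forall_natCast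
    (g := fun x : ℤ_[p] => f (t + p ^ m * x) - f t - p ^ m * x * Δ_[1] f t)
    (by fun_prop) (fun c => ?_) x
  have := dvd_shift_sub_sum_fwdDiff_iter 1 f t (p ^ m * c) 2 fun k hk =>
    pow_dvd_choose_smul_fwdDiff_iter hdvd hD2 (dvd_mul_right _ _) hk t
  simpa [sum_range_succ, sub_add_eq_sub_sub] using this

end

theorem stmt5 (p : ℕ) [Fact p.Prime] (f : ℤ_[p] → ℤ_[p]) (hf : KS2 p f)
    (h1 : ∃ u : ℤ_[p], IsUnit u ∧ deltaH p 1 f 1 0 = (p : ℤ_[p]) * u)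
    (h2 : p = 2 → (p : ℤ_[p]) ^ 3 ∣ deltaH p 1 f 2 0) :
    ∀ s t : ℤ_[p], ‖f s - f t‖ = (p : ℝ)⁻¹ * ‖s - t‖ := by
  obtain ⟨hf, hdvd⟩ := hf
  simp only [deltaH_one_eq_fwdDiff_iter, Function.iterate_one] at hdvd h1 h2
  have hD2 : p = 2 → ∀ s, (p : ℤ_[p]) ^ 3 ∣ Δ_[1] ^[2] f s := fun hp2 s => by
    simpa using dvd_add (pow_dvd_fwdDiff_iter_sub_fwdDiff_iter_zero (j := 2) hf
      (fun k s hk => (pow_dvd_pow _ hk).trans (hdvd k s)) s) (h2 hp2)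
  intro s t
  rcases eq_or_ne s t with rfl | hst
  · simp
  set m := (s - t).valuation
  set u := PadicInt.unitCoeff (sub_ne_zero.2 hst)
  have hst' : s = t + p ^ m * u := by
    rw [mul_comm, ← PadicInt.unitCoeff_spec]; ring
  obtain ⟨w, hw, hΔ⟩ := exists_isUnit_fwdDiff_eq_p_mul hf hdvd h1 t
  obtain ⟨r, hr⟩ := pow_dvd_sub_sub_mul_fwdDiff hf hdvd hD2 t m u
  have hfst : f s - f t = p ^ (m + 1) * (u * w + p * r) := by
    rw [hst']; linear_combination hr + p ^ m * u * hΔ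
  rw [hfst, hst', add_sub_cancel_left, norm_mul, norm_mul,
    PadicInt.isUnit_iff.1 (PadicInt.isUnit_add_p_mul (u.isUnit.mul hw) r),
    PadicInt.norm_units, pow_succ, norm_mul, PadicInt.norm_p]
  ring
end
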